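/- arXiv:2409.05671 — 2 statements merged into one kernel-verified Lean document; each statement's English description precedes it below -/
import Mathlib

section
/- Let p, q, x ∈ 𝕂ⁿ. Then d(x,p) ≤ d(x,q) if and only if (1 − x⋅p)/√(1 − ‖p‖²) ≤ (1 − x⋅q)/√(1 − ‖q‖²). Consequently, each hyperbolic Voronoi cell in the Klein–Beltrami model is the intersection of 𝕂ⁿ with finitely many affine (Euclidean) half-spaces, one per competing site. -/
/-- Lorentzian inner product in homogeneous coordinates: `⟨u,v⟩ = u⋅v − 1`. -/
noncomputable def lorentz {n : ℕ} (u v : EuclideanSpace ℝ (Fin n)) : ℝ :=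
  (inner ℝ u v : ℝ) - 1

/-- Inverse hyperbolic cosine: `arcosh t = log (t + √(t² − 1))`. -/
noncomputable def arcosh (t : ℝ) : ℝ := Real.log (t + Real.sqrt (t ^ 2 - 1))

/-- The hyperbolic distance on the Klein–Beltrami ball. -/
noncomputable def kleinDist {n : ℕ} (x y : EuclideanSpace ℝ (Fin n)) : ℝ :=
  arcosh (-(lorentz x y) / Real.sqrt (lorentz x x * lorentz y y))

/-!
Up to the common factor `√(1 - ‖x‖²)`, the argument of `arcosh` in `d(x, p)` is
`(1 - x⋅p) / √(1 - ‖p‖²)`, which is positive on the ball. Since `arcosh` is increasing on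
`(0, ∞)`, comparing `d(x, p)` with `d(x, q)` amounts to comparing these quantities, and that
comparison is affine in `x`.
-/

open RealInnerProductSpace

-- Below `1` the square root vanishes and `arcosh t = log t`, which is still increasing.
theorem arcosh_strictMonoOn : StrictMonoOn arcosh (Set.Ioi 0) := by
  intro a ha b _ hab
  have hsqrt : Real.sqrt (a ^ 2 - 1) ≤ Real.sqrt (b ^ 2 - 1) :=
    Real.sqrt_le_sqrt (by nlinarith [Set.mem_Ioi.mp ha])
  exact Real.log_lt_log (by positivity [Set.mem_Ioi.mp ha]) (by linarith)

theorem sqrt_one_sub_norm_sq_pos {E : Type*} [SeminormedAddCommGroup E] {x : E} (hx : ‖x‖ < 1) :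
    0 < Real.sqrt (1 - ‖x‖ ^ 2) :=
  Real.sqrt_pos.mpr (by nlinarith [norm_nonneg x])

section InnerProductSpace

variable {E : Type*} [SeminormedAddCommGroup E] [InnerProductSpace ℝ E]

theorem real_inner_lt_one_of_norm_lt_one {x y : E} (hx : ‖x‖ < 1) (hy : ‖y‖ < 1) :
    ⟪x, y⟫ < 1 :=
  (real_inner_le_norm x y).trans_lt
    (mul_lt_one_of_nonneg_of_lt_one_left (norm_nonneg x) hx hy.le)

theorem one_sub_inner_div_le_iff_inner_sub_smul_ge (a b : ℝ) (x p q : E) :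
    (1 - ⟪x, p⟫) / a ≤ (1 - ⟪x, q⟫) / b ↔ ⟪a⁻¹ • p - b⁻¹ • q, x⟫ ≥ a⁻¹ - b⁻¹ := by
  rw [inner_sub_left, real_inner_smul_left, real_inner_smul_left, real_inner_comm x p,
    real_inner_comm x q, div_eq_inv_mul, div_eq_inv_mul, mul_one_sub, mul_one_sub, ge_iff_le]
  constructor <;> intro h <;> linarith

end InnerProductSpace

section KleinModel

variable {n : ℕ}

theorem kleinDist_eq_arcosh {x y : EuclideanSpace ℝ (Fin n)} (hx : ‖x‖ ≤ 1) :
    kleinDist x y =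
      arcosh ((1 - ⟪x, y⟫) / Real.sqrt (1 - ‖y‖ ^ 2) / Real.sqrt (1 - ‖x‖ ^ 2)) := by
  have hx' : 0 ≤ 1 - ‖x‖ ^ 2 := by nlinarith [norm_nonneg x]
  rw [kleinDist, lorentz, lorentz, lorentz, real_inner_self_eq_norm_sq,
    real_inner_self_eq_norm_sq, neg_sub,
    show (‖x‖ ^ 2 - 1) * (‖y‖ ^ 2 - 1) = (1 - ‖x‖ ^ 2) * (1 - ‖y‖ ^ 2) by ring,
    Real.sqrt_mul hx', div_div, mul_comm (Real.sqrt (1 - ‖x‖ ^ 2))]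

theorem kleinDist_le_kleinDist_iff {p q x : EuclideanSpace ℝ (Fin n)}
    (hp : ‖p‖ < 1) (hq : ‖q‖ < 1) (hx : ‖x‖ < 1) :
    kleinDist x p ≤ kleinDist x q ↔
      (1 - ⟪x, p⟫) / Real.sqrt (1 - ‖p‖ ^ 2) ≤ (1 - ⟪x, q⟫) / Real.sqrt (1 - ‖q‖ ^ 2) := by
  have hsx := sqrt_one_sub_norm_sq_pos hx
  have hxp := sub_pos.mpr (real_inner_lt_one_of_norm_lt_one hx hp)
  have hxq := sub_pos.mpr (real_inner_lt_one_of_norm_lt_one hx hq)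
  have hsp := sqrt_one_sub_norm_sq_pos hp
  have hsq := sqrt_one_sub_norm_sq_pos hq
  rw [kleinDist_eq_arcosh hx.le, kleinDist_eq_arcosh hx.le,
    arcosh_strictMonoOn.le_iff_le (Set.mem_Ioi.mpr (by positivity))
      (Set.mem_Ioi.mpr (by positivity)),
    div_le_div_iff_of_pos_right hsx]

end KleinModel

/-- Comparison of hyperbolic distances in the Klein–Beltrami model is an affine condition:
`d(x,p) ≤ d(x,q) ↔ (1 − x⋅p)/√(1−‖p‖²) ≤ (1 − x⋅q)/√(1−‖q‖²)`.  Consequently, each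
hyperbolic Voronoi cell is the intersection of the ball with one affine half-space per
competing site. -/
theorem kleinDist_le_iff_and_voronoi_halfspaces {n : ℕ} :
    (∀ p q x : EuclideanSpace ℝ (Fin n), ‖p‖ < 1 → ‖q‖ < 1 → ‖x‖ < 1 →
      (kleinDist x p ≤ kleinDist x q ↔
        (1 - (inner ℝ x p : ℝ)) / Real.sqrt (1 - ‖p‖ ^ 2)
          ≤ (1 - (inner ℝ x q : ℝ)) / Real.sqrt (1 - ‖q‖ ^ 2))) ∧
    (∀ P : Finset (EuclideanSpace ℝ (Fin n)), (∀ r ∈ P, ‖r‖ < 1) →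
      ∀ p ∈ P,
        {x : EuclideanSpace ℝ (Fin n) | ‖x‖ < 1 ∧ ∀ q ∈ P, kleinDist x p ≤ kleinDist x q}
          = {x : EuclideanSpace ℝ (Fin n) | ‖x‖ < 1 ∧ ∀ q ∈ P,
              (inner ℝ ((Real.sqrt (1 - ‖p‖ ^ 2))⁻¹ • p - (Real.sqrt (1 - ‖q‖ ^ 2))⁻¹ • q) x : ℝ)
                ≥ (Real.sqrt (1 - ‖p‖ ^ 2))⁻¹ - (Real.sqrt (1 - ‖q‖ ^ 2))⁻¹}) := by
  refine ⟨fun p q x hp hq hx => kleinDist_le_kleinDist_iff hp hq hx, fun P hP p hpP => ?_⟩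
  ext x
  refine and_congr_right fun hx => forall₂_congr fun q hqP => ?_
  exact (kleinDist_le_kleinDist_iff (hP p hpP) (hP q hqP) hx).trans
    (one_sub_inner_div_le_iff_inner_sub_smul_ge _ _ x p q)
end

section
/- Let p, q ∈ 𝕂ⁿ with p ≠ q. Then the hyperbolic bisector {x ∈ 𝕂ⁿ : d(x,p) = d(x,q)} equals the intersection of 𝕂ⁿ with the affine hyperplane {x ∈ ℝⁿ : a⋅x = b}, where a = p/√(1 − ‖p‖²) − q/√(1 − ‖q‖²) and b = 1/√(1 − ‖p‖²) − 1/√(1 − ‖q‖²); moreover a ≠ 0 or b ≠ 0, so this set is a genuine hyperplane slice of the ball. -/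
/-!
Lifting a point `p` of the Klein ball to the hyperboloid gives `γ(p) • (p, 1)` with
`γ(p) = 1/√(1 − ‖p‖²)`, and `cosh d(x, p) = γ(x) γ(p) (1 − x⋅p)`. For fixed `p` this is `γ(x)`
times a function that is affine in `x`, so after cancelling `γ(x)` and using injectivity of
`arcosh` on `[1, ∞)`, the equation `d(x, p) = d(x, q)` becomes the affine equation
`(γ(p) p − γ(q) q)⋅x = γ(p) − γ(q)`. The lift `p ↦ (γ(p) p, γ(p))` is injective, so the
hyperplane is non-degenerate when `p ≠ q`.
-/

open RealInnerProductSpace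

lemma arcosh_injOn : Set.InjOn arcosh (Set.Ici 1) := by
  intro a (ha : 1 ≤ a) b (hb : 1 ≤ b) h
  have ha' : 0 ≤ a ^ 2 - 1 := by nlinarith
  have hb' : 0 ≤ b ^ 2 - 1 := by nlinarith
  have hpos : ∀ t : ℝ, 1 ≤ t → t + √(t ^ 2 - 1) ∈ Set.Ioi 0 := fun t ht =>
    show 0 < t + √(t ^ 2 - 1) by positivity
  have hlog : a + √(a ^ 2 - 1) = b + √(b ^ 2 - 1) := Real.log_injOn_pos (hpos a ha) (hpos b hb) h
  nlinarith [Real.sq_sqrt ha', Real.sq_sqrt hb', Real.sqrt_nonneg (a ^ 2 - 1),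
    Real.sqrt_nonneg (b ^ 2 - 1)]

section Klein

variable {n : ℕ}

/-- Junk value `0` for `‖p‖ ≥ 1`. -/
noncomputable def lorentzFactor (p : EuclideanSpace ℝ (Fin n)) : ℝ := (√(1 - ‖p‖ ^ 2))⁻¹

lemma lorentzFactor_pos {p : EuclideanSpace ℝ (Fin n)} (hp : ‖p‖ < 1) : 0 < lorentzFactor p := by
  have : 0 < 1 - ‖p‖ ^ 2 := by nlinarith [norm_nonneg p]
  unfold lorentzFactor
  positivity

noncomputable def kleinCosh (x p : EuclideanSpace ℝ (Fin n)) : ℝ :=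
  lorentzFactor x * lorentzFactor p * (1 - ⟪x, p⟫)

lemma kleinDist_eq_arcosh_kleinCosh {x : EuclideanSpace ℝ (Fin n)} (hx : ‖x‖ ≤ 1)
    (p : EuclideanSpace ℝ (Fin n)) : kleinDist x p = arcosh (kleinCosh x p) := by
  have hx2 : 0 ≤ 1 - ‖x‖ ^ 2 := by nlinarith [norm_nonneg x]
  have hprod : lorentz x x * lorentz p p = (1 - ‖x‖ ^ 2) * (1 - ‖p‖ ^ 2) := by
    simp only [lorentz, real_inner_self_eq_norm_sq]
    ring
  rw [kleinDist, kleinCosh, lorentzFactor, lorentzFactor, hprod, Real.sqrt_mul hx2, lorentz,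
    div_eq_mul_inv, mul_inv]
  ring_nf

lemma sqrt_mul_sqrt_le_one_sub_inner {x p : EuclideanSpace ℝ (Fin n)} (hx : ‖x‖ ≤ 1)
    (hp : ‖p‖ ≤ 1) : √(1 - ‖x‖ ^ 2) * √(1 - ‖p‖ ^ 2) ≤ 1 - ⟪x, p⟫ := by
  have hx2 : 0 ≤ 1 - ‖x‖ ^ 2 := by nlinarith [norm_nonneg x]
  have hnorms : 0 ≤ 1 - ‖x‖ * ‖p‖ := by nlinarith [norm_nonneg x, norm_nonneg p]
  calc √(1 - ‖x‖ ^ 2) * √(1 - ‖p‖ ^ 2) = √((1 - ‖x‖ ^ 2) * (1 - ‖p‖ ^ 2)) :=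
        (Real.sqrt_mul hx2 _).symm
    _ ≤ 1 - ‖x‖ * ‖p‖ := Real.sqrt_le_iff.mpr ⟨hnorms, by nlinarith [sq_nonneg (‖x‖ - ‖p‖)]⟩
    _ ≤ 1 - ⟪x, p⟫ := by linarith [real_inner_le_norm x p]

lemma one_le_kleinCosh {x p : EuclideanSpace ℝ (Fin n)} (hx : ‖x‖ < 1) (hp : ‖p‖ < 1) :
    1 ≤ kleinCosh x p := by
  have hγ : 0 < lorentzFactor x * lorentzFactor p :=
    mul_pos (lorentzFactor_pos hx) (lorentzFactor_pos hp)
  rw [kleinCosh, ← div_le_iff₀' hγ, one_div, lorentzFactor, lorentzFactor, ← mul_inv, inv_inv]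
  exact sqrt_mul_sqrt_le_one_sub_inner hx.le hp.le

lemma kleinDist_eq_kleinDist_iff {x p q : EuclideanSpace ℝ (Fin n)} (hx : ‖x‖ < 1)
    (hp : ‖p‖ < 1) (hq : ‖q‖ < 1) :
    kleinDist x p = kleinDist x q ↔ kleinCosh x p = kleinCosh x q := by
  rw [kleinDist_eq_arcosh_kleinCosh hx.le, kleinDist_eq_arcosh_kleinCosh hx.le]
  exact arcosh_injOn.eq_iff (one_le_kleinCosh hx hp) (one_le_kleinCosh hx hq)

lemma kleinCosh_eq_kleinCosh_iff {x : EuclideanSpace ℝ (Fin n)} (hx : ‖x‖ < 1)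
    (p q : EuclideanSpace ℝ (Fin n)) :
    kleinCosh x p = kleinCosh x q ↔
      ⟪lorentzFactor p • p - lorentzFactor q • q, x⟫ = lorentzFactor p - lorentzFactor q := by
  rw [kleinCosh, kleinCosh, mul_assoc, mul_assoc, mul_right_inj' (lorentzFactor_pos hx).ne',
    inner_sub_left, real_inner_smul_left, real_inner_smul_left, real_inner_comm x p,
    real_inner_comm x q]
  constructor <;> intro h <;> linarith

lemma eq_of_lorentzFactor_smul_eq {p q : EuclideanSpace ℝ (Fin n)} (hp : ‖p‖ < 1)
    (hγ : lorentzFactor p = lorentzFactor q) (hs : lorentzFactor p • p = lorentzFactor q • q) :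
    p = q :=
  smul_right_injective _ (lorentzFactor_pos hp).ne' (hs.trans (by rw [hγ]))

end Klein

/-- The hyperbolic bisector of two distinct points `p ≠ q` of the Klein–Beltrami ball is the
intersection of the ball with the affine hyperplane `{x : a⋅x = b}`, where
`a = p/√(1−‖p‖²) − q/√(1−‖q‖²)` and `b = 1/√(1−‖p‖²) − 1/√(1−‖q‖²)`; moreover `a ≠ 0` or
`b ≠ 0`, so this is a genuine hyperplane slice of the ball. -/
theorem klein_bisector_is_hyperplane {n : ℕ} (p q : EuclideanSpace ℝ (Fin n))
    (hp : ‖p‖ < 1) (hq : ‖q‖ < 1) (hpq : p ≠ q) :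
    ({x : EuclideanSpace ℝ (Fin n) | ‖x‖ < 1 ∧ kleinDist x p = kleinDist x q}
        = {x : EuclideanSpace ℝ (Fin n) | ‖x‖ < 1 ∧
            (inner ℝ ((Real.sqrt (1 - ‖p‖ ^ 2))⁻¹ • p - (Real.sqrt (1 - ‖q‖ ^ 2))⁻¹ • q) x : ℝ)
              = (Real.sqrt (1 - ‖p‖ ^ 2))⁻¹ - (Real.sqrt (1 - ‖q‖ ^ 2))⁻¹}) ∧
      ((Real.sqrt (1 - ‖p‖ ^ 2))⁻¹ • p - (Real.sqrt (1 - ‖q‖ ^ 2))⁻¹ • q ≠ 0 ∨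
        (Real.sqrt (1 - ‖p‖ ^ 2))⁻¹ - (Real.sqrt (1 - ‖q‖ ^ 2))⁻¹ ≠ 0) := by
  change _ = {x | ‖x‖ < 1 ∧
      ⟪lorentzFactor p • p - lorentzFactor q • q, x⟫ = lorentzFactor p - lorentzFactor q} ∧
    (lorentzFactor p • p - lorentzFactor q • q ≠ 0 ∨ lorentzFactor p - lorentzFactor q ≠ 0)
  refine ⟨Set.ext fun x => and_congr_right fun hx => ?_, ?_⟩
  · rw [kleinDist_eq_kleinDist_iff hx hp hq, kleinCosh_eq_kleinCosh_iff hx]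
  · rw [← not_and_or, sub_eq_zero, sub_eq_zero]
    exact fun ⟨hs, hγ⟩ => hpq (eq_of_lorentzFactor_smul_eq hp hγ hs)
end
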